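/- arXiv:2601.04242 — 4 statements merged into one kernel-verified Lean document; each statement's English description precedes it below -/
import Mathlib

section
/- Define J_0 = 1 and J_m = ∫_0^1 m·t^{m-1}(1-t)e^t dt for m ≥ 1, and K_m = (-1)^m J_m. Then K_m = (m+1)! - e·D_{m+1} for all m ≥ 0, where D_n is the n-th derangement number and e = exp(1). -/
open Real intervalIntegral

lemma Iclosed_aux : ∀ m : ℕ, (∫ t in (0:ℝ)..1, t ^ m * Real.exp t)
    = (-1 : ℝ) ^ m * ((numDerangements m : ℝ) * Real.exp 1 - (Nat.factorial m : ℝ)) := by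
  intro m
  induction m with
  | zero => simp [integral_exp]
  | succ n ih =>
    have ibp : (∫ t in (0:ℝ)..1, t ^ (n+1) * Real.exp t)
        = Real.exp 1 - (n+1 : ℝ) * ∫ t in (0:ℝ)..1, t ^ n * Real.exp t := by
      have h := intervalIntegral.integral_mul_deriv_eq_deriv_mul
        (u := fun t : ℝ => t ^ (n+1)) (v := Real.exp)
        (u' := fun t : ℝ => (n+1 : ℝ) * t ^ n) (v' := Real.exp)
        (a := 0) (b := 1)
        (fun x _ => by simpa using (hasDerivAt_pow (n+1) x))
        (fun x _ => Real.hasDerivAt_exp x)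
        (by apply Continuous.intervalIntegrable; continuity)
        (by apply Continuous.intervalIntegrable; continuity)
      simp only [mul_assoc] at h
      rw [h, intervalIntegral.integral_const_mul]
      norm_num
    rw [ibp, ih]
    have hd : ((numDerangements (n+1) : ℝ)) = ((n:ℝ)+1) * (numDerangements n : ℝ) - (-1)^n := by
      have h2 : ((numDerangements (n + 1) : ℤ) : ℝ)
          = (((n+1 : ℤ) * (numDerangements n : ℤ) - (-1) ^ n : ℤ) : ℝ) :=
        congrArg (fun z : ℤ => (z : ℝ)) (numDerangements_succ n)
      push_cast at h2
      linarith [h2]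
    have hr : ((-1:ℝ))^n * (-1)^n = 1 := by
      rw [← pow_add, ← two_mul, pow_mul]; norm_num
    rw [Nat.factorial_succ]
    push_cast
    linear_combination ((-1:ℝ)^n * Real.exp 1) * hd - Real.exp 1 * hr

theorem stmt_6 (J K : ℕ → ℝ)
    (hJ0 : J 0 = 1)
    (hJ : ∀ m : ℕ, 1 ≤ m →
      J m = ∫ t in (0:ℝ)..1, m * t ^ (m - 1) * (1 - t) * Real.exp t)
    (hK : ∀ m : ℕ, K m = (-1) ^ m * J m) :
    ∀ m : ℕ, K m = Nat.factorial (m + 1) - Real.exp 1 * numDerangements (m + 1) := by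
  intro m
  match m with
  | 0 => simp [hK 0, hJ0]
  | n + 1 =>
    have int1 : IntervalIntegrable (fun t : ℝ => ((n:ℝ)+1) * (t ^ n * Real.exp t)) MeasureTheory.volume 0 1 := by
      apply Continuous.intervalIntegrable; continuity
    have int2 : IntervalIntegrable (fun t : ℝ => ((n:ℝ)+1) * (t ^ (n+1) * Real.exp t)) MeasureTheory.volume 0 1 := by
      apply Continuous.intervalIntegrable; continuity
    have hJsplit : J (n+1) = ((n:ℝ)+1) * ((∫ t in (0:ℝ)..1, t ^ n * Real.exp t)
        - ∫ t in (0:ℝ)..1, t ^ (n+1) * Real.exp t) := by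
      rw [hJ (n+1) (by omega)]
      rw [mul_sub, ← intervalIntegral.integral_const_mul, ← intervalIntegral.integral_const_mul,
        ← intervalIntegral.integral_sub int1 int2]
      apply intervalIntegral.integral_congr
      intro t _
      simp only [Nat.add_sub_cancel]
      push_cast
      ring
    have hr : ((-1:ℝ))^n * (-1)^n = 1 := by
      rw [← pow_add, ← two_mul, pow_mul]; norm_num
    have hd : ((numDerangements (n+2) : ℝ))
        = ((n:ℝ)+1) * ((numDerangements n : ℝ) + (numDerangements (n+1) : ℝ)) := by
      exact_mod_cast congrArg (fun k : ℕ => (k : ℝ)) (numDerangements_add_two n)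
    have hf : ((Nat.factorial (n+2) : ℝ)) = ((n:ℝ)+2) * (((n:ℝ)+1) * (Nat.factorial n : ℝ)) := by
      rw [Nat.factorial_succ, Nat.factorial_succ]; push_cast; ring
    rw [hK (n+1), hJsplit, Iclosed_aux n, Iclosed_aux (n+1)]
    rw [show n + 1 + 1 = n + 2 from rfl, hf, hd, Nat.factorial_succ]
    push_cast
    linear_combination -(((n:ℝ)+1) * ((numDerangements n : ℝ) + (numDerangements (n+1) : ℝ)) * Real.exp 1
      - ((n:ℝ)+1) * ((Nat.factorial n : ℝ) + ((n:ℝ)+1) * (Nat.factorial n : ℝ))) * hr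
end

section
/- Define L_0 = 1 and L_m = ∫_0^1 m·t^{m-1}·sqrt((1-t)/(1+t)) dt for m ≥ 1. Then L_{m+2} = L_m - L_{m+1}/(m+1) for all m ≥ 0. -/
/-!
The whole recurrence is one integration by parts in disguise: for `-1 < t < 1`,
`d/dt [-tᵐ (1 - t) √(1 - t²)] = ((m + 2) tᵐ⁺¹ + tᵐ - m tᵐ⁻¹) √((1 - t) / (1 + t))`,
because `√(1 - t²) = (1 + t) √((1 - t) / (1 + t))`. Integrating over `[0, 1]` gives
`L_{m+2} + L_{m+1} / (m + 1) - (L_m - 0ᵐ) = 0ᵐ`; the boundary term `0ᵐ` at `t = 0` is exactly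
what the convention `L_0 = 1` accounts for.
-/

open Real intervalIntegral

noncomputable def sqrtRatioIntegral (m : ℕ) : ℝ :=
  ∫ t in (0:ℝ)..1, m * t ^ (m - 1) * √((1 - t) / (1 + t))

lemma sqrt_one_sub_sq_eq_mul_sqrt_div {t : ℝ} (ht : -1 < t) :
    √(1 - t ^ 2) = (1 + t) * √((1 - t) / (1 + t)) := by
  have hpos : 0 < 1 + t := by linarith
  rw [← sqrt_sq hpos.le, ← sqrt_mul (sq_nonneg _), sqrt_sq hpos.le]
  congr 1
  field_simp
  ring

lemma natCast_mul_pow_pred_mul_self (m : ℕ) (x : ℝ) :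
    (m : ℝ) * x ^ (m - 1) * x = m * x ^ m := by
  rcases m with _ | m
  · simp
  · simp [pow_succ, mul_assoc]

lemma hasDerivAt_pow_mul_one_sub_mul_sqrt (m : ℕ) {t : ℝ} (ht₀ : -1 < t) (ht₁ : t < 1) :
    HasDerivAt (fun x : ℝ => -(x ^ m * (1 - x)) * √(1 - x ^ 2))
      (((m + 2) * t ^ (m + 1) + t ^ m - m * t ^ (m - 1)) * √((1 - t) / (1 + t))) t := by
  have hsq_pos : 0 < 1 - t ^ 2 := by nlinarith
  have hplus : 0 < 1 + t := by linarith
  have hminus : 0 < 1 - t := by linarith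
  have hw_pos : 0 < √((1 - t) / (1 + t)) := sqrt_pos.2 (div_pos hminus hplus)
  have hpoly : HasDerivAt (fun x : ℝ => -(x ^ m * (1 - x)))
      (-(m * t ^ (m - 1) * (1 - t) + t ^ m * (0 - 1))) t :=
    ((hasDerivAt_pow m t).mul ((hasDerivAt_const t 1).sub (hasDerivAt_id t))).neg
  have hsqrt : HasDerivAt (fun x : ℝ => √(1 - x ^ 2)) ((0 - 2 * t ^ 1) / (2 * √(1 - t ^ 2))) t :=
    ((hasDerivAt_const t 1).sub (hasDerivAt_pow 2 t)).sqrt hsq_pos.ne'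
  refine (hpoly.mul hsqrt).congr_deriv ?_
  rw [sqrt_one_sub_sq_eq_mul_sqrt_div ht₀]
  have hw_sq : √((1 - t) / (1 + t)) ^ 2 = (1 - t) / (1 + t) :=
    sq_sqrt (div_pos hminus hplus).le
  have hpred := natCast_mul_pow_pred_mul_self m t
  field_simp
  rw [hw_sq]
  field_simp
  linear_combination 2 * t * hpred

lemma continuousOn_sqrt_one_sub_div_one_add :
    ContinuousOn (fun t : ℝ => √((1 - t) / (1 + t))) (Set.Ioi (-1)) := by
  refine (ContinuousOn.div (by fun_prop) (by fun_prop) fun t ht => ?_).sqrt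
  linarith [Set.mem_Ioi.1 ht]

lemma intervalIntegrable_mul_sqrt_one_sub_div_one_add {g : ℝ → ℝ} (hg : Continuous g) :
    IntervalIntegrable (fun t : ℝ => g t * √((1 - t) / (1 + t))) MeasureTheory.volume 0 1 := by
  refine (hg.continuousOn.mul (continuousOn_sqrt_one_sub_div_one_add.mono ?_)).intervalIntegrable
  rw [Set.uIcc_of_le zero_le_one]
  exact fun t ht => show -1 < t by linarith [ht.1]

lemma integral_recurrence_combination_eq_zero_pow (m : ℕ) :
    ∫ t in (0:ℝ)..1, ((m + 2) * t ^ (m + 1) + t ^ m - m * t ^ (m - 1)) * √((1 - t) / (1 + t))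
      = 0 ^ m := by
  rw [integral_eq_sub_of_hasDerivAt_of_le zero_le_one (by fun_prop)
    (fun t ht => hasDerivAt_pow_mul_one_sub_mul_sqrt m (by linarith [ht.1]) ht.2)
    (intervalIntegrable_mul_sqrt_one_sub_div_one_add (by fun_prop))]
  simp

lemma sqrtRatioIntegral_add_two (m : ℕ) :
    sqrtRatioIntegral (m + 2)
      = sqrtRatioIntegral m - sqrtRatioIntegral (m + 1) / (m + 1) + 0 ^ m := by
  have hsplit : ∀ t : ℝ,
      ((m + 2) * t ^ (m + 1) + t ^ m - m * t ^ (m - 1)) * √((1 - t) / (1 + t))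
        = ((m + 2 : ℕ) : ℝ) * t ^ (m + 2 - 1) * √((1 - t) / (1 + t))
          + ((m + 1 : ℕ) : ℝ) * t ^ (m + 1 - 1) * √((1 - t) / (1 + t)) / (m + 1)
          - m * t ^ (m - 1) * √((1 - t) / (1 + t)) := fun t => by
    simp only [Nat.add_sub_cancel]
    field_simp
    push_cast
    ring
  have h := integral_recurrence_combination_eq_zero_pow m
  simp only [hsplit] at h
  have hint : ∀ n : ℕ, IntervalIntegrable (fun t : ℝ => n * t ^ (n - 1) * √((1 - t) / (1 + t)))
      MeasureTheory.volume 0 1 := fun n =>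
    intervalIntegrable_mul_sqrt_one_sub_div_one_add (by fun_prop)
  rw [integral_sub ((hint _).add ((hint _).div_const _)) (hint _),
    integral_add (hint _) ((hint _).div_const _), integral_div] at h
  unfold sqrtRatioIntegral
  linarith

theorem stmt_9 (L : ℕ → ℝ)
    (hL0 : L 0 = 1)
    (hL : ∀ m : ℕ, 1 ≤ m →
      L m = ∫ t in (0:ℝ)..1, m * t ^ (m - 1) * Real.sqrt ((1 - t) / (1 + t))) :
    ∀ m : ℕ, L (m + 2) = L m - L (m + 1) / (m + 1) := by
  have hL_eq : ∀ n, L n = 0 ^ n + sqrtRatioIntegral n := by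
    rintro (_ | n)
    · simp [hL0, sqrtRatioIntegral]
    · simp [hL _ n.succ_pos, sqrtRatioIntegral]
  intro m
  rw [hL_eq, hL_eq, hL_eq, sqrtRatioIntegral_add_two]
  simp only [zero_pow (Nat.succ_ne_zero _), zero_add]
  ring
end

section
/- Define rational sequences p_m and q_m by p_0 = 1, p_1 = 1, q_0 = 0, q_1 = 1/2, and p_{m+2} = p_m + p_{m+1}/(m+1), q_{m+2} = q_m + q_{m+1}/(m+1). Then p_{2k+1} = p_{2k} for all k ≥ 1 and q_{2k} = q_{2k-1} for all k ≥ 1. -/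
theorem stmt_11 (p q : ℕ → ℚ)
    (hp0 : p 0 = 1) (hp1 : p 1 = 1) (hq0 : q 0 = 0) (hq1 : q 1 = 1 / 2)
    (hp : ∀ m : ℕ, p (m + 2) = p m + p (m + 1) / (m + 1))
    (hq : ∀ m : ℕ, q (m + 2) = q m + q (m + 1) / (m + 1)) :
    (∀ k : ℕ, 1 ≤ k → p (2 * k + 1) = p (2 * k)) ∧
    (∀ k : ℕ, 1 ≤ k → q (2 * k) = q (2 * k - 1)) := by
  have key : ∀ k : ℕ, p (2 * k + 1) = p (2 * k) ∧ q (2 * k + 2) = q (2 * k + 1) := by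
    intro k
    induction k with
    | zero =>
      constructor
      · simpa [hp1] using hp0.symm
      · have := hq 0
        simp [hq0, hq1] at this
        simp [this, hq1]
    | succ n ih =>
      obtain ⟨ih1, ih2⟩ := ih
      have hne1 : ((2 * n : ℚ) + 1) ≠ 0 := by positivity
      have hne2 : ((2 * n : ℚ) + 2) ≠ 0 := by positivity
      have hne3 : ((2 * n : ℚ) + 3) ≠ 0 := by positivity
      have hp2 : p (2 * n + 2) = p (2 * n + 1) * (2 * n + 2) / (2 * n + 1) := by
        have h := hp (2 * n)
        rw [ih1] at h ⊢
        push_cast at h ⊢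
        rw [h]; field_simp; ring
      have hp3 : p (2 * n + 3) = p (2 * n + 1) + p (2 * n + 2) / (2 * n + 2) := by
        have h := hp (2 * n + 1)
        push_cast at h
        convert h using 2 <;> ring
      have hq2 : q (2 * n + 3) = q (2 * n + 2) * (2 * n + 3) / (2 * n + 2) := by
        have h := hq (2 * n + 1)
        rw [← ih2] at h
        push_cast at h
        have h3 : (2 * n + 3 : ℕ) = (2 * n + 1) + 2 := by ring
        rw [h3, h]
        field_simp
        ring
      have hq4 : q (2 * n + 4) = q (2 * n + 2) + q (2 * n + 3) / (2 * n + 3) := by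
        have h := hq (2 * n + 2)
        push_cast at h
        have h4 : (2 * n + 4 : ℕ) = (2 * n + 2) + 2 := by ring
        rw [h4, h]
        push_cast
        ring_nf
      constructor
      · have h3 : (2 * (n + 1) + 1 : ℕ) = 2 * n + 3 := by ring
        have h2 : (2 * (n + 1) : ℕ) = 2 * n + 2 := by ring
        rw [h3, h2, hp3, hp2]
        field_simp
        ring
      · have h4 : (2 * (n + 1) + 2 : ℕ) = 2 * n + 4 := by ring
        have h3 : (2 * (n + 1) + 1 : ℕ) = 2 * n + 3 := by ring
        rw [h4, h3, hq4, hq2]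
        field_simp
        ring
  constructor
  · intro k _
    exact (key k).1
  · intro k hk
    obtain ⟨j, rfl⟩ := Nat.exists_eq_add_of_le hk
    have h : (2 * (1 + j) : ℕ) = 2 * j + 2 := by ring
    rw [h, show (2 * j + 2 - 1 : ℕ) = 2 * j + 1 from by omega]
    exact (key j).2
end

section
/- Define p_0 = 1, p_1 = 1, and p_{m+2} = p_m + p_{m+1}/(m+1). Then for all k ≥ 1, p_{2k} = (2k)!! / (2k-1)!!, where n!! denotes the double factorial. -/
/-!
The odd-indexed terms only repeat the even ones: if `p (2k+1) = p (2k)`, the recurrence gives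
`p (2k+2) = (2k+2)/(2k+1) · p (2k)` and then `p (2k+3) = p (2k+2)`. Since `p 1 = p 0`, induction
shows that each even term is the previous one times `(2k+2)/(2k+1)`, which telescopes to the
quotient of double factorials.
-/

open Nat

section Recurrence

variable {p : ℕ → ℚ} (hp : ∀ m : ℕ, p (m + 2) = p m + p (m + 1) / (m + 1))
include hp

lemma even_succ_of_odd_eq_even {k : ℕ} (h : p (2 * k + 1) = p (2 * k)) :
    p (2 * k + 2) = (2 * k + 2) / (2 * k + 1) * p (2 * k) := by
  rw [hp, h]
  push_cast
  field_simp
  ring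

lemma odd_eq_even_of_odd_eq_even {k : ℕ} (h : p (2 * k + 1) = p (2 * k)) :
    p (2 * k + 3) = p (2 * k + 2) := by
  rw [hp, even_succ_of_odd_eq_even hp h, h]
  push_cast
  field_simp
  ring

lemma odd_eq_even (h01 : p 1 = p 0) (k : ℕ) : p (2 * k + 1) = p (2 * k) := by
  induction k with
  | zero => exact h01
  | succ k ih => exact odd_eq_even_of_odd_eq_even hp ih

lemma even_eq_doubleFactorial_div (h01 : p 1 = p 0) (k : ℕ) :
    p (2 * k) = p 0 * (2 * k)‼ / (2 * k - 1)‼ := by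
  induction k with
  | zero => simp
  | succ k ih =>
    have hodd : (2 * k + 1)‼ = (2 * k + 1) * (2 * k - 1)‼ := doubleFactorial_add_one (2 * k)
    have hpos : ((2 * k - 1)‼ : ℚ) ≠ 0 := by positivity
    rw [show 2 * (k + 1) = 2 * k + 2 by ring, show 2 * k + 2 - 1 = 2 * k + 1 by omega,
      even_succ_of_odd_eq_even hp (odd_eq_even hp h01 k), ih, doubleFactorial_add_two, hodd]
    push_cast
    field_simp

end Recurrence

theorem stmt_12 (p : ℕ → ℚ)
    (hp0 : p 0 = 1) (hp1 : p 1 = 1)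
    (hp : ∀ m : ℕ, p (m + 2) = p m + p (m + 1) / (m + 1)) :
    ∀ k : ℕ, 1 ≤ k →
      p (2 * k) = (Nat.doubleFactorial (2 * k) : ℚ) / (Nat.doubleFactorial (2 * k - 1) : ℚ) := by
  intro k _
  simpa [hp0] using even_eq_doubleFactorial_div hp (hp1.trans hp0.symm) k
end
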